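/- Let A and B be bounded linear operators on H and t ∈ [0,1]. For the off-diagonal block operators on H ⊕ H one has the equality ‖(0 A; B 0)‖_{t-ber} = ‖(0 B; A 0)‖_{t-ber}, where the t-Berezin norms are taken with respect to the family of unit vectors of H ⊕ H of the form (c₁ k_{λ₁}, c₂ k_{λ₂}) with λ₁, λ₂ ∈ Ω and |c₁|² + |c₂|² = 1. -/

import Mathlib

open ContinuousLinearMap
open scoped InnerProductSpace

/-- The `t`-Berezin norm of `A` with respect to the family `k` of (normalized reproducing
kernel) vectors. -/
noncomputable def tber {E : Type*} [NormedAddCommGroup E] [InnerProductSpace ℂ E]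
    [CompleteSpace E] {ι : Type*} (k : ι → E) (t : ℝ) (A : E →L[ℂ] E) : ℝ :=
  ⨆ p : ι × ι, (t * ‖⟪A (k p.1), k p.2⟫_ℂ‖ + (1 - t) * ‖⟪adjoint A (k p.1), k p.2⟫_ℂ‖)

/-- The Berezin norm of `A` with respect to the family `k`. -/
noncomputable def berNorm {E : Type*} [NormedAddCommGroup E] [InnerProductSpace ℂ E]
    {ι : Type*} (k : ι → E) (A : E →L[ℂ] E) : ℝ :=
  ⨆ p : ι × ι, ‖⟪A (k p.1), k p.2⟫_ℂ‖

/-- The Berezin number of `A` with respect to the family `k`. -/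
noncomputable def berNum {E : Type*} [NormedAddCommGroup E] [InnerProductSpace ℂ E]
    {ι : Type*} (k : ι → E) (A : E →L[ℂ] E) : ℝ :=
  ⨆ l : ι, ‖⟪A (k l), k l⟫_ℂ‖

/-- The modulus `|A| = (A*A)^(1/2)` of an operator, via the continuous functional calculus. -/
noncomputable def absOp {H : Type*} [NormedAddCommGroup H] [InnerProductSpace ℂ H]
    [CompleteSpace H] (A : H →L[ℂ] H) : H →L[ℂ] H :=
  cfc Real.sqrt (adjoint A * A)

/-- Real powers of a (positive) operator via the continuous functional calculus. -/
noncomputable def rpowOp {H : Type*} [NormedAddCommGroup H] [InnerProductSpace ℂ H]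
    [CompleteSpace H] (A : H →L[ℂ] H) (r : ℝ) : H →L[ℂ] H :=
  cfc (fun x : ℝ => x ^ r) A

/-- The family of unit vectors `(c₁ k_{λ₁}, c₂ k_{λ₂})` of `H ⊕ H` (realized as `WithLp 2 (H × H)`)
indexed by pairs of kernel indices and pairs of scalars with `|c₁|² + |c₂|² = 1`. -/
noncomputable def K2 {H : Type*} [NormedAddCommGroup H] [InnerProductSpace ℂ H]
    {Ω : Type*} (k : Ω → H) :
    {q : (Ω × Ω) × ℂ × ℂ // ‖q.2.1‖ ^ 2 + ‖q.2.2‖ ^ 2 = 1} → WithLp 2 (H × H) :=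
  fun q => (WithLp.equiv 2 (H × H)).symm (q.1.2.1 • k q.1.1.1, q.1.2.2 • k q.1.1.2)

theorem stmt8 {H : Type*} [NormedAddCommGroup H] [InnerProductSpace ℂ H] [CompleteSpace H]
    {Ω : Type*} [Nonempty Ω] (k : Ω → H) (hk : ∀ l, ‖k l‖ = 1)
    (t : ℝ) (ht : t ∈ Set.Icc (0 : ℝ) 1) (A B : H →L[ℂ] H)
    (T S : WithLp 2 (H × H) →L[ℂ] WithLp 2 (H × H))
    (hT : ∀ x y : H, T ((WithLp.equiv 2 (H × H)).symm (x, y)) =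
      (WithLp.equiv 2 (H × H)).symm (A y, B x))
    (hS : ∀ x y : H, S ((WithLp.equiv 2 (H × H)).symm (x, y)) =
      (WithLp.equiv 2 (H × H)).symm (B y, A x)) :
    tber (K2 k) t T = tber (K2 k) t S := by
  classical
  set ι := {q : (Ω × Ω) × ℂ × ℂ // ‖q.2.1‖ ^ 2 + ‖q.2.2‖ ^ 2 = 1} with hι
  let e : ι ≃ ι :=
    { toFun := fun q => ⟨((q.1.1.2, q.1.1.1), (q.1.2.2, q.1.2.1)), by
        simpa [add_comm] using q.2⟩
      invFun := fun q => ⟨((q.1.1.2, q.1.1.1), (q.1.2.2, q.1.2.1)), by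
        simpa [add_comm] using q.2⟩
      left_inv := fun q => rfl
      right_inv := fun q => rfl }
  have key : ∀ q p : ι, ⟪T (K2 k q), K2 k p⟫_ℂ = ⟪S (K2 k (e q)), K2 k (e p)⟫_ℂ := by
    rintro ⟨⟨⟨l1, l2⟩, c1, c2⟩, hq⟩ ⟨⟨⟨m1, m2⟩, d1, d2⟩, hp⟩
    show ⟪T ((WithLp.equiv 2 (H × H)).symm (c1 • k l1, c2 • k l2)),
        (WithLp.equiv 2 (H × H)).symm (d1 • k m1, d2 • k m2)⟫_ℂ =
      ⟪S ((WithLp.equiv 2 (H × H)).symm (c2 • k l2, c1 • k l1)),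
        (WithLp.equiv 2 (H × H)).symm (d2 • k m2, d1 • k m1)⟫_ℂ
    rw [hT, hS]
    simp only [WithLp.prod_inner_apply, WithLp.equiv_symm_apply, WithLp.ofLp_toLp,
      map_smul, inner_smul_left, inner_smul_right]
    ring
  have adj : ∀ (R : WithLp 2 (H × H) →L[ℂ] WithLp 2 (H × H)) (q p : ι),
      ‖⟪adjoint R (K2 k q), K2 k p⟫_ℂ‖ = ‖⟪R (K2 k p), K2 k q⟫_ℂ‖ := by
    intro R q p
    rw [adjoint_inner_left, norm_inner_symm]
  have hfun : ∀ p : ι × ι,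
      (t * ‖⟪T (K2 k p.1), K2 k p.2⟫_ℂ‖ + (1 - t) * ‖⟪adjoint T (K2 k p.1), K2 k p.2⟫_ℂ‖)
      = (fun r : ι × ι =>
          t * ‖⟪S (K2 k r.1), K2 k r.2⟫_ℂ‖ +
            (1 - t) * ‖⟪adjoint S (K2 k r.1), K2 k r.2⟫_ℂ‖) (Equiv.prodCongr e e p) := by
    intro p
    simp only [Equiv.prodCongr_apply, Prod.map_fst, Prod.map_snd]
    rw [adj T, adj S, key p.1 p.2, key p.2 p.1]
  calc tber (K2 k) t T
      = ⨆ p : ι × ι, (fun r : ι × ι =>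
          t * ‖⟪S (K2 k r.1), K2 k r.2⟫_ℂ‖ +
            (1 - t) * ‖⟪adjoint S (K2 k r.1), K2 k r.2⟫_ℂ‖) (Equiv.prodCongr e e p) := by
        unfold tber; exact iSup_congr hfun
    _ = tber (K2 k) t S := by unfold tber; exact Equiv.iSup_comp (g := fun r : ι × ι => t * ‖⟪S (K2 k r.1), K2 k r.2⟫_ℂ‖ + (1 - t) * ‖⟪adjoint S (K2 k r.1), K2 k r.2⟫_ℂ‖) (Equiv.prodCongr e e)
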